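/- Let α ∈ ℝ, τ > 0, h > 0 and let x : ℤ × ℤ → ℝ be a grid function with x_s(n,i) ≠ 0 for all (n,i), satisfying the invariant scheme for the SMHD equations with horizontal bottom: x_tť(n,i) − α² x_sš(n,i) + [1/(x_s(n+1,i) x_s(n−1,i)) − 1/(x_s(n+1,i−1) x_s(n−1,i−1))]/h = 0 for all (n,i). Then the finite-difference center-of-mass law holds: for all (n,i), ([t_n x_t(n,i) − x(n,i)] − [t_{n−1} x_t(n−1,i) − x(n−1,i)])/τ + ( [t_n/(x_s(n+1,i) x_s(n−1,i)) − t_n α² x_s(n,i)] − [t_n/(x_s(n+1,i−1) x_s(n−1,i−1)) − t_n α² x_s(n,i−1)] )/h = 0, where t_n = n τ. -/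

import Mathlib

/-!
The law is `t_n` times the scheme. In time this is the discrete product rule
`(t_n x_t(n) - t_{n-1} x_t(n-1)) / τ = t_n x_tť + x_t(n-1)`, whose last term is cancelled by the
backward difference of `x` itself; in space it is `x_sš = (x_s(n,i) - x_s(n,i-1)) / h`.
-/

/-- Forward time difference on a uniform mesh with time step τ. -/
noncomputable def xt (τ : ℝ) (x : ℤ → ℤ → ℝ) (n i : ℤ) : ℝ := (x (n + 1) i - x n i) / τ

/-- Forward space difference on a uniform mesh with space step h. -/
noncomputable def xs (h : ℝ) (x : ℤ → ℤ → ℝ) (n i : ℤ) : ℝ := (x n (i + 1) - x n i) / h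

/-- Second time difference. -/
noncomputable def xtt (τ : ℝ) (x : ℤ → ℤ → ℝ) (n i : ℤ) : ℝ :=
  (x (n + 1) i - 2 * x n i + x (n - 1) i) / τ ^ 2

/-- Second space difference. -/
noncomputable def xss (h : ℝ) (x : ℤ → ℤ → ℝ) (n i : ℤ) : ℝ :=
  (x n (i + 1) - 2 * x n i + x n (i - 1)) / h ^ 2

lemma xss_eq_xs_sub_xs_div (h : ℝ) (x : ℤ → ℤ → ℝ) (n i : ℤ) :
    xss h x n i = (xs h x n i - xs h x n (i - 1)) / h := by
  simp only [xss, xs, sub_add_cancel]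
  ring

lemma backward_diff_time_flux_eq_mul_xtt {τ : ℝ} (hτ : τ ≠ 0) (x : ℤ → ℤ → ℝ) (n i : ℤ) :
    (((n : ℝ) * τ * xt τ x n i - x n i)
        - (((n : ℝ) - 1) * τ * xt τ x (n - 1) i - x (n - 1) i)) / τ
      = (n : ℝ) * τ * xtt τ x n i := by
  simp only [xt, xtt, sub_add_cancel]
  field_simp
  ring

theorem fd_smhd_center_of_mass
    (α τ h : ℝ) (hτ : 0 < τ)
    (x : ℤ → ℤ → ℝ)
    (scheme : ∀ n i : ℤ,
      xtt τ x n i - α ^ 2 * xss h x n i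
        + (1 / (xs h x (n + 1) i * xs h x (n - 1) i)
            - 1 / (xs h x (n + 1) (i - 1) * xs h x (n - 1) (i - 1))) / h = 0) :
    ∀ n i : ℤ,
      (((n : ℝ) * τ * xt τ x n i - x n i)
          - (((n : ℝ) - 1) * τ * xt τ x (n - 1) i - x (n - 1) i)) / τ
        + (((n : ℝ) * τ / (xs h x (n + 1) i * xs h x (n - 1) i)
              - (n : ℝ) * τ * α ^ 2 * xs h x n i)
            - ((n : ℝ) * τ / (xs h x (n + 1) (i - 1) * xs h x (n - 1) (i - 1))
              - (n : ℝ) * τ * α ^ 2 * xs h x n (i - 1))) / h = 0 := by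
  intro n i
  rw [backward_diff_time_flux_eq_mul_xtt hτ.ne']
  have hscheme := scheme n i
  rw [xss_eq_xs_sub_xs_div] at hscheme
  linear_combination ((n : ℝ) * τ) * hscheme
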